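/- For every f ∈ A_LP, the function g(x) := f̂(x/r(f)) belongs to A₁, satisfies g(0) = 1 and ρ₁(g) = Z(f), where Z(f) := r(f) + (2/r(f)) ∫₀^{r(f)} f(x) x dx; consequently C₁ ≤ Z(f) for every f ∈ A_LP. -/

import Mathlib

open MeasureTheory Filter
open scoped Classical

noncomputable section

/-- The Fourier transform `ĝ(α) = ∫ g(x) e^{-2πiαx} dx` of a real-valued function. -/
def fourierT (g : ℝ → ℝ) (α : ℝ) : ℂ :=
  ∫ x : ℝ, (g x : ℂ) * Complex.exp (-(2 * Real.pi * α * x : ℝ) * Complex.I)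

/-- The class `A₁` of continuous, even, non-negative functions `g ∈ L¹(ℝ)`
with `ĝ(α) ≤ 0` for `|α| ≥ 1` (such `ĝ` is real-valued since `g` is even and real). -/
def memA1 (g : ℝ → ℝ) : Prop :=
  Continuous g ∧ (∀ x, g (-x) = g x) ∧ (∀ x, 0 ≤ g x) ∧ MeasureTheory.Integrable g ∧
    ∀ α : ℝ, 1 ≤ |α| → (fourierT g α).re ≤ 0

/-- The functional `ρ₁(g) = ĝ(0) + ∫_{-1}^{1} ĝ(α)|α| dα`. -/
def rho1 (g : ℝ → ℝ) : ℝ :=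
  (fourierT g 0).re + ∫ α in (-1 : ℝ)..1, (fourierT g α).re * |α|

/-- The constant `C₁ = inf ρ₁(g)/g(0)` over nonzero `g ∈ A₁` with `g(0) > 0`. -/
def C1 : ℝ :=
  sInf {c : ℝ | ∃ g : ℝ → ℝ, memA1 g ∧ g ≠ 0 ∧ 0 < g 0 ∧ c = rho1 g / g 0}

/-- The Cohn–Elkies linear programming class `A_LP`: even continuous `f ∈ L¹(ℝ)` with
`f(0) = f̂(0) = 1`, `f̂ ≥ 0`, and `f` eventually non-positive. -/
def memALP (f : ℝ → ℝ) : Prop :=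
  Continuous f ∧ (∀ x, f (-x) = f x) ∧ MeasureTheory.Integrable f ∧
    f 0 = 1 ∧ fourierT f 0 = 1 ∧ (∀ α : ℝ, 0 ≤ (fourierT f α).re) ∧
    ∃ r : ℝ, ∀ x : ℝ, r ≤ |x| → f x ≤ 0

/-- The last sign change `r(f) = inf{r > 0 : f(x) ≤ 0 for all |x| ≥ r}`. -/
def lastSign (f : ℝ → ℝ) : ℝ :=
  sInf {r : ℝ | 0 < r ∧ ∀ x : ℝ, r ≤ |x| → f x ≤ 0}

/-- The functional `Z(f) = r(f) + (2/r(f)) ∫₀^{r(f)} f(x) x dx`. -/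
def Zfun (f : ℝ → ℝ) : ℝ :=
  lastSign f + (2 / lastSign f) * ∫ x in (0 : ℝ)..(lastSign f), f x * x

/-!
Since `f̂ ≥ 0` and `f` is continuous at `0`, Fatou's lemma applied to the Gaussian-damped integrals
`∫ e^{-‖ξ‖²/c} f̂(ξ) dξ → f(0)` shows `f̂ ∈ L¹`; Fourier inversion and the evenness of `f` then give
`(f̂)^ = f`. Rescaling, `g(x) = f̂(x/r)` has `ĝ(α) = r f(rα)`, which is `≤ 0` for `|α| ≥ 1` because
`f ≤ 0` from its last sign change `r` on. Substituting `x = rα` in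
`ρ₁(g) = r f(0) + ∫_{-1}^{1} r f(rα)|α| dα` yields `Z(f)`. Finally `|ĝ| ≤ ĝ(0)` for `g ≥ 0` gives
`ρ₁(g) ≥ ĝ(0) (1 - ∫_{-1}^{1} |α| dα) = 0` on `A₁`, so `C₁` is the infimum of a set bounded below
that contains `ρ₁(g)/g(0) = Z(f)`.
-/

open Complex Real
open scoped FourierTransform Topology RealInnerProductSpace ComplexConjugate

section Fourier

variable {V : Type*} [NormedAddCommGroup V] [InnerProductSpace ℝ V] [MeasurableSpace V]
  [BorelSpace V] [FiniteDimensional ℝ V]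

lemma fourier_neg_of_even {E : Type*} [NormedAddCommGroup E] [NormedSpace ℂ E] {f : V → E}
    (hf : ∀ x, f (-x) = f x) (w : V) : 𝓕 f (-w) = 𝓕 f w := by
  have h := fourier_comp_linearIsometry (LinearIsometryEquiv.neg ℝ (E := V)) f w
  simp only [LinearIsometryEquiv.coe_neg, Function.comp_def, hf] at h
  exact h.symm

lemma fourier_ofReal_neg (f : V → ℝ) (w : V) :
    𝓕 (fun v => (f v : ℂ)) (-w) = conj (𝓕 (fun v => (f v : ℂ)) w) := by
  simp only [fourier_eq', ← integral_conj, smul_eq_mul, map_mul, conj_ofReal, ← exp_conj,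
    inner_neg_right]
  congr 1 with v
  congr 2
  simp only [conj_I]
  push_cast
  ring

lemma ofReal_re_fourier_of_even {f : V → ℝ} (hf : ∀ x, f (-x) = f x) (w : V) :
    ((𝓕 (fun v => (f v : ℂ)) w).re : ℂ) = 𝓕 (fun v => (f v : ℂ)) w := by
  rw [← conj_eq_iff_re, ← fourier_ofReal_neg, fourier_neg_of_even (fun x => by rw [hf])]

lemma tendsto_integral_cexp_sq_smul_fourier {E : Type*} [NormedAddCommGroup E]
    [NormedSpace ℂ E] [CompleteSpace E] {f : V → E} (hf : Integrable f) (h0 : ContinuousAt f 0) :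
    Tendsto (fun c : ℝ => ∫ ξ : V, cexp (-(c : ℂ)⁻¹ * ‖ξ‖ ^ 2) • 𝓕 f ξ) atTop (𝓝 (f 0)) := by
  refine (Real.tendsto_integral_gaussian_smul' hf h0).congr' ?_
  filter_upwards [Ioi_mem_atTop 0] with c (hc : 0 < c)
  have hb : 0 < ((c : ℂ)⁻¹).re := by simpa using hc
  have hG : Integrable (fun v : V => cexp (-(c : ℂ)⁻¹ * ‖v‖ ^ 2)) := by
    simpa using GaussianFourier.integrable_cexp_neg_mul_sq_norm_add hb 0 (0 : V)
  have hswap := VectorFourier.integral_fourierIntegral_smul_eq_flip (L := innerₗ V)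
    Real.continuous_fourierChar continuous_inner hG hf
  rw [flip_innerₗ] at hswap
  change ∫ w, 𝓕 (fun v : V => cexp (-(c : ℂ)⁻¹ * ‖v‖ ^ 2)) w • f w =
    ∫ ξ, cexp (-(c : ℂ)⁻¹ * ‖ξ‖ ^ 2) • 𝓕 f ξ at hswap
  rw [← hswap]
  congr 1 with w
  rw [fourier_gaussian_innerProductSpace hb]
  congr 2
  · simp [div_eq_mul_inv]
  · simp only [zero_sub, norm_neg, div_inv_eq_mul]
    ring_nf

lemma continuous_fourier_of_integrable {E : Type*} [NormedAddCommGroup E] [NormedSpace ℂ E]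
    [CompleteSpace E] {f : V → E} (hf : Integrable f) : Continuous (𝓕 f) :=
  VectorFourier.fourierIntegral_continuous Real.continuous_fourierChar continuous_inner hf

lemma norm_fourier_le_integral_norm {E : Type*} [NormedAddCommGroup E] [NormedSpace ℂ E]
    (f : V → E) (w : V) : ‖𝓕 f w‖ ≤ ∫ v, ‖f v‖ :=
  VectorFourier.norm_fourierIntegral_le_integral_norm _ _ _ _ _

lemma integrable_re_fourier_of_re_nonneg {f : V → ℂ} (hf : Integrable f)
    (h0 : ContinuousAt f 0) (hpos : ∀ ξ, 0 ≤ (𝓕 f ξ).re) :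
    Integrable (fun ξ => (𝓕 f ξ).re) := by
  set H : ℝ → V → ℂ := fun c ξ => cexp (-(c : ℂ)⁻¹ * ‖ξ‖ ^ 2) • 𝓕 f ξ with hH
  have hcont : Continuous (𝓕 f) := continuous_fourier_of_integrable hf
  have hH_re : ∀ c ξ, (H c ξ).re = rexp (-c⁻¹ * ‖ξ‖ ^ 2) * (𝓕 f ξ).re := fun c ξ => by
    simp only [hH, smul_eq_mul, ← ofReal_inv, ← ofReal_pow, ← ofReal_neg, ← ofReal_mul,
      ← ofReal_exp, re_ofReal_mul]
  have hH_nonneg : ∀ c ξ, 0 ≤ (H c ξ).re := fun c ξ => by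
    rw [hH_re]
    exact mul_nonneg (exp_pos _).le (hpos ξ)
  have hH_int : ∀ c : ℝ, 0 < c → Integrable (H c) := fun c hc => by
    have hb : 0 < ((c : ℂ)⁻¹).re := by simpa using hc
    exact Integrable.smul_of_top_left (by
        simpa using GaussianFourier.integrable_cexp_neg_mul_sq_norm_add hb 0 (0 : V) :
        Integrable (fun v : V => cexp (-(c : ℂ)⁻¹ * ‖v‖ ^ 2)))
      (memLp_top_of_bound hcont.aestronglyMeasurable _
        (Eventually.of_forall (norm_fourier_le_integral_norm f)))
  have hH_lim : ∀ ξ, Tendsto (fun c => (H c ξ).re) atTop (𝓝 (𝓕 f ξ).re) := fun ξ => by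
    refine (continuous_re.tendsto _).comp ?_
    have hgauss : Tendsto (fun c : ℝ => cexp (-(c : ℂ)⁻¹ * ‖ξ‖ ^ 2)) atTop (𝓝 1) := by
      simpa using (tendsto_inv_atTop_zero.ofReal.neg.mul_const ((‖ξ‖ : ℂ) ^ 2)).cexp
    simpa only [one_smul] using hgauss.smul_const (𝓕 f ξ)
  have hlint : ∫⁻ ξ, ENNReal.ofReal (𝓕 f ξ).re ≤ ENNReal.ofReal (f 0).re :=
    calc ∫⁻ ξ, ENNReal.ofReal (𝓕 f ξ).re
        = ∫⁻ ξ, liminf (fun c => ENNReal.ofReal (H c ξ).re) atTop := by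
          congr with ξ
          exact ((ENNReal.continuous_ofReal.tendsto _).comp (hH_lim ξ)).liminf_eq.symm
      _ ≤ liminf (fun c => ∫⁻ ξ, ENNReal.ofReal (H c ξ).re) atTop :=
          lintegral_liminf_le' fun c => by fun_prop
      _ = ENNReal.ofReal (f 0).re := by
          refine Tendsto.liminf_eq ?_
          refine ((ENNReal.continuous_ofReal.tendsto _).comp ((continuous_re.tendsto _).comp
            (tendsto_integral_cexp_sq_smul_fourier hf h0))).congr' ?_
          filter_upwards [Ioi_mem_atTop 0] with c (hc : 0 < c)
          change ENNReal.ofReal (∫ ξ, H c ξ).re = _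
          rw [show (∫ ξ, H c ξ).re = ∫ ξ, (H c ξ).re from (integral_re (hH_int c hc)).symm]
          exact ofReal_integral_eq_lintegral_ofReal (hH_int c hc).re
            (Eventually.of_forall (hH_nonneg c))
  exact ⟨(continuous_re.comp hcont).aestronglyMeasurable,
    (hasFiniteIntegral_iff_ofReal (Eventually.of_forall hpos)).2
      (hlint.trans_lt ENNReal.ofReal_lt_top)⟩

lemma integrable_fourier_ofReal_of_even {f : V → ℝ} (hf : Integrable f)
    (h0 : ContinuousAt f 0) (hev : ∀ x, f (-x) = f x)
    (hpos : ∀ ξ, 0 ≤ (𝓕 (fun v => (f v : ℂ)) ξ).re) : Integrable (𝓕 (fun v => (f v : ℂ))) := by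
  rw [← funext (ofReal_re_fourier_of_even hev)]
  exact (integrable_re_fourier_of_re_nonneg hf.ofReal (by fun_prop) hpos).ofReal

lemma fourier_fourier_ofReal_of_even {f : V → ℝ} (hc : Continuous f) (hf : Integrable f)
    (hf' : Integrable (𝓕 (fun v => (f v : ℂ)))) (hev : ∀ x, f (-x) = f x) (w : V) :
    𝓕 (𝓕 (fun v => (f v : ℂ))) w = f w := by
  rw [← fourier_neg_of_even (fourier_neg_of_even fun x => by rw [hev]),
    ← fourierInv_eq_fourier_neg, hf.ofReal.fourierInv_fourier_eq hf' (by fun_prop)]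

end Fourier

lemma fourierT_eq_fourier (g : ℝ → ℝ) (α : ℝ) :
    fourierT g α = 𝓕 (fun x => (g x : ℂ)) α := by
  rw [fourierT, Real.fourier_real_eq_integral_exp_smul]
  congr 1 with x
  rw [smul_eq_mul, mul_comm]
  congr 3
  push_cast
  ring

lemma fourier_comp_div {E : Type*} [NormedAddCommGroup E] [NormedSpace ℂ E] (f : ℝ → E)
    {r : ℝ} (hr : r ≠ 0) (w : ℝ) : 𝓕 (fun x => f (x / r)) w = |r| • 𝓕 f (r * w) := by
  simp only [Real.fourier_real_eq]
  rw [← Measure.integral_comp_div (fun u => 𝐞 (-(u * (r * w))) • f u) r]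
  congr 1 with v
  field_simp

lemma fourierT_comp_div (g : ℝ → ℝ) {r : ℝ} (hr : r ≠ 0) (α : ℝ) :
    fourierT (fun x => g (x / r)) α = |r| * fourierT g (r * α) := by
  rw [fourierT_eq_fourier, fourierT_eq_fourier, ← Complex.real_smul,
    ← fourier_comp_div (fun x => (g x : ℂ)) hr]

lemma fourierT_neg_of_even {g : ℝ → ℝ} (hev : ∀ x, g (-x) = g x) (α : ℝ) :
    fourierT g (-α) = fourierT g α := by
  simp only [fourierT_eq_fourier]
  exact fourier_neg_of_even (fun x => by rw [hev]) α

lemma continuous_fourierT {g : ℝ → ℝ} (hg : Integrable g) : Continuous (fourierT g) := by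
  simpa only [← funext (fourierT_eq_fourier g)] using
    continuous_fourier_of_integrable (f := fun x => (g x : ℂ)) hg.ofReal

lemma fourierT_zero (g : ℝ → ℝ) : fourierT g 0 = ∫ x, g x := by
  simp only [fourierT, ofReal_zero, mul_zero, zero_mul, neg_zero, Complex.exp_zero, mul_one]
  exact integral_ofReal

lemma norm_fourierT_le (g : ℝ → ℝ) (α : ℝ) : ‖fourierT g α‖ ≤ ∫ x, |g x| := by
  simpa [fourierT_eq_fourier] using norm_fourier_le_integral_norm (fun x => (g x : ℂ)) α

namespace memALP

variable {f : ℝ → ℝ}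

lemma ofReal_re_fourierT (hf : memALP f) (α : ℝ) :
    ((fourierT f α).re : ℂ) = fourierT f α := by
  simpa only [fourierT_eq_fourier] using ofReal_re_fourier_of_even hf.2.1 α

lemma integrable_fourierT_re (hf : memALP f) : Integrable (fun α => (fourierT f α).re) := by
  obtain ⟨hc, -, hint, -, -, hpos, -⟩ := hf
  simp only [fourierT_eq_fourier] at hpos ⊢
  exact integrable_re_fourier_of_re_nonneg hint.ofReal (by fun_prop) hpos

lemma fourierT_fourierT_re (hf : memALP f) (x : ℝ) :
    fourierT (fun α => (fourierT f α).re) x = f x := by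
  have hF : (fun α => ((fourierT f α).re : ℂ)) = 𝓕 (fun v => (f v : ℂ)) :=
    funext fun α => by rw [hf.ofReal_re_fourierT, fourierT_eq_fourier]
  obtain ⟨hc, hev, hint, -, -, hpos, -⟩ := hf
  simp only [fourierT_eq_fourier] at hpos
  rw [fourierT_eq_fourier, hF, fourier_fourier_ofReal_of_even hc hint
    (integrable_fourier_ofReal_of_even hint hc.continuousAt hev hpos) hev]

end memALP

section LastSign

variable {f : ℝ → ℝ}

lemma lastSign_set_nonempty (hS : ∃ r, ∀ x, r ≤ |x| → f x ≤ 0) :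
    {r : ℝ | 0 < r ∧ ∀ x : ℝ, r ≤ |x| → f x ≤ 0}.Nonempty :=
  let ⟨r, hr⟩ := hS
  ⟨max r 1, by positivity, fun x hx => hr x (le_of_max_le_left hx)⟩

lemma lastSign_pos (hc : ContinuousAt f 0) (h0 : 0 < f 0)
    (hS : ∃ r, ∀ x, r ≤ |x| → f x ≤ 0) : 0 < lastSign f := by
  obtain ⟨ε, hε, hball⟩ := Metric.eventually_nhds_iff.1 (hc.eventually (lt_mem_nhds h0))
  refine hε.trans_le (le_csInf (lastSign_set_nonempty hS) fun s ⟨hs, hsneg⟩ => ?_)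
  by_contra! hsε
  exact (hsneg s (le_abs_self s)).not_gt (hball (by rwa [Real.dist_0_eq_abs, abs_of_pos hs]))

lemma nonpos_of_lastSign_lt (hS : ∃ r, ∀ x, r ≤ |x| → f x ≤ 0) {x : ℝ}
    (hx : lastSign f < |x|) : f x ≤ 0 := by
  obtain ⟨s, ⟨-, hs⟩, hsx⟩ := exists_lt_of_csInf_lt (lastSign_set_nonempty hS) hx
  exact hs x hsx.le

/-- The infimum defining `lastSign f` is attained, by continuity along the ray through `x`. -/
lemma nonpos_of_lastSign_le (hc : Continuous f) (h0 : 0 < f 0)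
    (hS : ∃ r, ∀ x, r ≤ |x| → f x ≤ 0) {x : ℝ} (hx : lastSign f ≤ |x|) : f x ≤ 0 := by
  have hx0 : 0 < |x| := (lastSign_pos hc.continuousAt h0 hS).trans_le hx
  have hlim : Tendsto (fun t => f (t * x)) (𝓝[>] 1) (𝓝 (f x)) := by
    simpa [Function.comp_def] using
      ((hc.comp (continuous_mul_const x)).tendsto 1).mono_left nhdsWithin_le_nhds
  refine le_of_tendsto hlim (eventually_nhdsWithin_of_forall fun t (ht : 1 < t) =>
    nonpos_of_lastSign_lt hS ?_)
  rw [abs_mul, abs_of_pos (one_pos.trans ht)]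
  nlinarith

end LastSign

lemma integral_neg_self_eq_two_mul_of_even {φ : ℝ → ℝ} (hφ : Continuous φ)
    (hev : ∀ x, φ (-x) = φ x) (a : ℝ) : ∫ x in -a..a, φ x = 2 * ∫ x in 0..a, φ x := by
  have hleft : ∫ x in -a..0, φ x = ∫ x in 0..a, φ x := by
    simpa [hev] using (intervalIntegral.integral_comp_neg (a := 0) (b := a) φ).symm
  rw [← intervalIntegral.integral_add_adjacent_intervals (b := 0) (hφ.intervalIntegrable _ _)
    (hφ.intervalIntegrable _ _), hleft]
  ring

lemma integral_abs_neg_one_one : ∫ α in (-1 : ℝ)..1, |α| = 1 := by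
  rw [integral_neg_self_eq_two_mul_of_even continuous_abs abs_neg,
    intervalIntegral.integral_congr (f := fun α : ℝ => |α|) (g := fun α => α)
      fun α hα => abs_of_nonneg (by simp_all [Set.uIcc]), integral_id]
  norm_num

lemma rho1_eq_of_re_fourierT {g φ : ℝ → ℝ} {r : ℝ} (hr : 0 < r) (hφ : Continuous φ)
    (hev : ∀ x, φ (-x) = φ x) (hg : ∀ α, (fourierT g α).re = r * φ (r * α)) :
    rho1 g = r * φ 0 + 2 / r * ∫ x in 0..r, φ x * x := by
  have hsub : ∫ α in (0 : ℝ)..1, r * φ (r * α) * |α| = r⁻¹ * ∫ x in 0..r, φ x * x := by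
    rw [intervalIntegral.integral_congr (g := fun α => (fun x => φ x * x) (r * α))
      fun α hα => by simp_all [Set.uIcc, abs_of_nonneg]; ring,
      intervalIntegral.integral_comp_mul_left (f := fun x => φ x * x) hr.ne', mul_zero, mul_one,
      smul_eq_mul]
  rw [rho1, hg, mul_zero, intervalIntegral.integral_congr fun α _ => by rw [hg],
    integral_neg_self_eq_two_mul_of_even (by fun_prop) (fun α => by simp [hev]), hsub]
  ring

lemma rho1_nonneg {g : ℝ → ℝ} (hg : memA1 g) : 0 ≤ rho1 g := by
  obtain ⟨-, -, hnn, hint, -⟩ := hg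
  have hbound : ∀ α, -(fourierT g 0).re ≤ (fourierT g α).re := fun α => by
    have h := (abs_re_le_norm _).trans (norm_fourierT_le g α)
    simp only [abs_of_nonneg (hnn _), fourierT_zero, ofReal_re] at h ⊢
    exact neg_le_of_abs_le h
  have hmono : ∫ α in (-1 : ℝ)..1, -(fourierT g 0).re * |α|
      ≤ ∫ α in (-1 : ℝ)..1, (fourierT g α).re * |α| :=
    intervalIntegral.integral_mono_on (by norm_num)
      ((continuous_const.mul continuous_abs).intervalIntegrable _ _)
      (((continuous_re.comp (continuous_fourierT hint)).mul continuous_abs).intervalIntegrable _ _)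
      fun α _ => mul_le_mul_of_nonneg_right (hbound α) (abs_nonneg α)
  rw [intervalIntegral.integral_const_mul, integral_abs_neg_one_one] at hmono
  rw [rho1]
  linarith

lemma C1_le_rho1_div {g : ℝ → ℝ} (hg : memA1 g) (h0 : 0 < g 0) : C1 ≤ rho1 g / g 0 :=
  csInf_le ⟨0, fun _ ⟨_, hg', _, h0', hc⟩ => hc ▸ div_nonneg (rho1_nonneg hg') h0'.le⟩
    ⟨g, hg, fun h => h0.ne' (congrFun h 0), h0, rfl⟩

/-- For every `f ∈ A_LP`, the function `g(x) := f̂(x/r(f))` belongs to `A₁`, satisfies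
`g(0) = 1` and `ρ₁(g) = Z(f)`; consequently `C₁ ≤ Z(f)` for every `f ∈ A_LP`. -/
theorem statement13 (f : ℝ → ℝ) (hf : memALP f) :
    memA1 (fun x => (fourierT f (x / lastSign f)).re) ∧
    (fun x => (fourierT f (x / lastSign f)).re) 0 = 1 ∧
    rho1 (fun x => (fourierT f (x / lastSign f)).re) = Zfun f ∧
    C1 ≤ Zfun f := by
  obtain ⟨hc, hev, hint, hf0, hft0, hpos, hS⟩ := id hf
  have hr : 0 < lastSign f := lastSign_pos hc.continuousAt (hf0 ▸ one_pos) hS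
  set r := lastSign f
  set g := fun x => (fourierT f (x / r)).re with hg
  have hĝ : ∀ α, (fourierT g α).re = r * f (r * α) := fun α => by
    rw [hg, fourierT_comp_div (fun ξ => (fourierT f ξ).re) hr.ne', hf.fourierT_fourierT_re,
      abs_of_pos hr, ← ofReal_mul, ofReal_re]
  have hA1 : memA1 g := by
    refine ⟨continuous_re.comp ((continuous_fourierT hint).comp (continuous_id.div_const r)),
      fun x => ?_, fun x => hpos _, hf.integrable_fourierT_re.comp_div hr.ne', fun α hα => ?_⟩
    · simp only [hg, neg_div, fourierT_neg_of_even hev]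
    · rw [hĝ]
      refine mul_nonpos_of_nonneg_of_nonpos hr.le (nonpos_of_lastSign_le hc (hf0 ▸ one_pos) hS ?_)
      rw [abs_mul, abs_of_pos hr]
      exact le_mul_of_one_le_right hr.le hα
  have hg0 : g 0 = 1 := by simp [hg, hft0]
  have hρ : rho1 g = Zfun f := by
    rw [rho1_eq_of_re_fourierT hr hc hev hĝ, hf0, mul_one, Zfun]
  refine ⟨hA1, hg0, hρ, ?_⟩
  simpa [hg0, hρ] using C1_le_rho1_div hA1 (hg0 ▸ one_pos)

end
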